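/- For d > 2, the standard deviation of r_k (with density p_k) is asymptotically decreasing in k: precisely, k^{1/2 − 1/d}·√(Γ(k+2/d)Γ(k) − Γ(k+1/d)²)/Γ(k) converges to 1/d as k → ∞. -/

import Mathlib

/-!
Put `a = 1 / d`, `W(x) = Γ(x + a) / (Γ(x) x^a)` and `R(x) = Γ(x + 2a) Γ(x) / Γ(x + a)²`; the
quantity in question is `W(k) · √(k (R(k) - 1))`.

Log-convexity of `Γ` squeezes `W(x)` between `(x / (x + a))^(1 - a)` and `1` (Wendel), so
`W(x) → 1`. Euler's limit formula writes `R(x)` as the infinite product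
`∏_{j ≥ 0} (1 + a² / ((x + j)(x + j + 2a)))`. Comparing the sum of the `a² / ((x + j)(x + j + 2a))`
with two telescoping sums, and using `1 + ∑ t_j ≤ ∏ (1 + t_j) ≤ exp (∑ t_j)`, gives
`a² / (x + 2a) ≤ R(x) - 1 ≤ exp (a² / (x - 1)) - 1`, hence `x (R(x) - 1) → a²`.
-/

open Real Filter Finset Topology

theorem Finset.one_add_sum_le_prod_one_add {ι R : Type*} [CommSemiring R] [PartialOrder R]
    [IsOrderedRing R] (s : Finset ι) {f : ι → R} (hf : ∀ i ∈ s, 0 ≤ f i) :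
    1 + ∑ i ∈ s, f i ≤ ∏ i ∈ s, (1 + f i) := by
  induction s using Finset.cons_induction with
  | empty => simp
  | cons i s _ ih =>
    rw [sum_cons, prod_cons]
    have hfi : 0 ≤ f i := hf i (mem_cons_self i s)
    have hs : 0 ≤ ∑ j ∈ s, f j := sum_nonneg fun j hj => hf j (mem_cons_of_mem hj)
    calc 1 + (f i + ∑ j ∈ s, f j) ≤ 1 + (f i + ∑ j ∈ s, f j) + f i * ∑ j ∈ s, f j :=
          le_add_of_nonneg_right (mul_nonneg hfi hs)
      _ = (1 + f i) * (1 + ∑ j ∈ s, f j) := by ring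
      _ ≤ (1 + f i) * ∏ j ∈ s, (1 + f j) :=
          mul_le_mul_of_nonneg_left (ih fun j hj => hf j (mem_cons_of_mem hj))
            (add_nonneg zero_le_one hfi)

theorem tendsto_div_add_const_atTop (c : ℝ) :
    Tendsto (fun x : ℝ => x / (x + c)) atTop (𝓝 1) := by
  have h : Tendsto (fun x : ℝ => 1 - c / (x + c)) atTop (𝓝 (1 - 0)) :=
    tendsto_const_nhds.sub <| tendsto_const_nhds.div_atTop <|
      tendsto_atTop_add_const_right _ c tendsto_id
  rw [sub_zero] at h
  refine h.congr' ?_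
  filter_upwards [eventually_gt_atTop (-c)] with x hx
  field_simp [(by linarith : x + c ≠ 0)]
  ring

theorem exp_sub_one_le_div_one_sub {u : ℝ} (h0 : 0 ≤ u) (h1 : u < 1) :
    exp u - 1 ≤ u / (1 - u) := by
  have := exp_bound_div_one_sub_of_interval h0 h1
  have h : 1 / (1 - u) - 1 = u / (1 - u) := by field_simp [(by linarith : 1 - u ≠ 0)]; ring
  linarith

noncomputable def gammaRatio (a x : ℝ) : ℝ := Gamma (x + 2 * a) * Gamma x / Gamma (x + a) ^ 2

section

variable {a x : ℝ}

theorem GammaSeq_ratio_eq_prod (hx : 0 < x) (ha : 0 ≤ a) {n : ℕ} (hn : n ≠ 0) :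
    GammaSeq (x + 2 * a) n * GammaSeq x n / GammaSeq (x + a) n ^ 2 =
      ∏ j ∈ range (n + 1), (1 + a ^ 2 / ((x + j) * (x + j + 2 * a))) := by
  have hn0 : (0 : ℝ) < n := by positivity
  have hpow : (n : ℝ) ^ (x + 2 * a) * (n : ℝ) ^ x = ((n : ℝ) ^ (x + a)) ^ 2 := by
    rw [sq, ← rpow_add hn0, ← rpow_add hn0]
    ring_nf
  have hfactor : ∀ j : ℕ, 1 + a ^ 2 / ((x + j) * (x + j + 2 * a)) =
      (x + a + j) ^ 2 / ((x + 2 * a + j) * (x + j)) := fun j => by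
    have : (0 : ℝ) < x + j := by positivity
    have : (0 : ℝ) < x + j + 2 * a := by positivity
    field_simp
    ring
  simp only [hfactor, prod_div_distrib, prod_mul_distrib, prod_pow, GammaSeq]
  have : (0 : ℝ) < ∏ j ∈ range (n + 1), (x + (j : ℝ)) := prod_pos fun j _ => by positivity
  have : (0 : ℝ) < ∏ j ∈ range (n + 1), (x + a + (j : ℝ)) := prod_pos fun j _ => by positivity
  have : (0 : ℝ) < ∏ j ∈ range (n + 1), (x + 2 * a + (j : ℝ)) :=
    prod_pos fun j _ => by positivity
  have : (0 : ℝ) < (n ^ (x + a)) := rpow_pos_of_pos hn0 _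
  have : (0 : ℝ) < n.factorial := by positivity
  field_simp
  linear_combination hpow

theorem tendsto_prod_one_add_sq_div_gammaRatio (hx : 0 < x) (ha : 0 ≤ a) :
    Tendsto (fun n => ∏ j ∈ range n, (1 + a ^ 2 / ((x + j) * (x + j + 2 * a)))) atTop
      (𝓝 (gammaRatio a x)) := by
  have hGamma : Gamma (x + a) ^ 2 ≠ 0 := pow_ne_zero 2 (Gamma_pos_of_pos (by linarith)).ne'
  have hlim := ((GammaSeq_tendsto_Gamma (x + 2 * a)).mul (GammaSeq_tendsto_Gamma x)).div
    ((GammaSeq_tendsto_Gamma (x + a)).pow 2) hGamma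
  refine (tendsto_add_atTop_iff_nat 1).1 (hlim.congr' ?_)
  filter_upwards [eventually_ne_atTop 0] with n hn
  exact GammaSeq_ratio_eq_prod hx ha hn

theorem sum_sq_div_mul_le (hx : 1 < x) (ha : 0 ≤ a) (n : ℕ) :
    ∑ j ∈ range n, a ^ 2 / ((x + j) * (x + j + 2 * a)) ≤ a ^ 2 / (x - 1) := by
  have hterm : ∀ j : ℕ, a ^ 2 / ((x + j) * (x + j + 2 * a)) ≤
      a ^ 2 / (x - 1 + j) - a ^ 2 / (x - 1 + (j + 1 : ℕ)) := fun j => by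
    have h0 : (0 : ℝ) < x - 1 + j := by positivity
    have h1 : (0 : ℝ) < x + j := by positivity
    rw [Nat.cast_succ, show x - 1 + (j + 1) = x + j by ring, div_sub_div _ _ h0.ne' h1.ne',
      show a ^ 2 * (x + j) - (x - 1 + j) * a ^ 2 = a ^ 2 by ring]
    exact div_le_div_of_nonneg_left (by positivity) (by positivity) (by nlinarith)
  calc _ ≤ ∑ j ∈ range n, (a ^ 2 / (x - 1 + j) - a ^ 2 / (x - 1 + (j + 1 : ℕ))) :=
        sum_le_sum fun j _ => hterm j
    _ = a ^ 2 / (x - 1) - a ^ 2 / (x - 1 + n) := by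
        rw [sum_range_sub' (fun j : ℕ => a ^ 2 / (x - 1 + j))]; simp
    _ ≤ a ^ 2 / (x - 1) := sub_le_self _ (by positivity)

theorem sq_div_sub_le_sum_sq_div_mul (hx : 0 < x) (ha : 0 ≤ a) (n : ℕ) :
    a ^ 2 / (x + 2 * a) - a ^ 2 / (x + 2 * a + n) ≤
      ∑ j ∈ range n, a ^ 2 / ((x + j) * (x + j + 2 * a)) := by
  have hterm : ∀ j : ℕ, a ^ 2 / (x + 2 * a + j) - a ^ 2 / (x + 2 * a + (j + 1 : ℕ)) ≤
      a ^ 2 / ((x + j) * (x + j + 2 * a)) := fun j => by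
    have h0 : (0 : ℝ) < x + 2 * a + j := by positivity
    have h1 : (0 : ℝ) < x + 2 * a + (j + 1) := by positivity
    rw [Nat.cast_succ, div_sub_div _ _ h0.ne' h1.ne',
      show a ^ 2 * (x + 2 * a + (j + 1)) - (x + 2 * a + j) * a ^ 2 = a ^ 2 by ring]
    have : (0 : ℝ) < x + j := by positivity
    exact div_le_div_of_nonneg_left (by positivity) (by positivity) (by nlinarith)
  calc _ = ∑ j ∈ range n, (a ^ 2 / (x + 2 * a + j) - a ^ 2 / (x + 2 * a + (j + 1 : ℕ))) := by
        rw [sum_range_sub' (fun j : ℕ => a ^ 2 / (x + 2 * a + j))]; simp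
    _ ≤ _ := sum_le_sum fun j _ => hterm j

theorem one_add_sq_div_le_gammaRatio (hx : 0 < x) (ha : 0 ≤ a) :
    1 + a ^ 2 / (x + 2 * a) ≤ gammaRatio a x := by
  have hlower : Tendsto (fun n : ℕ => 1 + (a ^ 2 / (x + 2 * a) - a ^ 2 / (x + 2 * a + n)))
      atTop (𝓝 (1 + (a ^ 2 / (x + 2 * a) - 0))) :=
    tendsto_const_nhds.add <| tendsto_const_nhds.sub <| tendsto_const_nhds.div_atTop <|
      tendsto_atTop_add_const_left _ _ tendsto_natCast_atTop_atTop
  rw [sub_zero] at hlower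
  refine le_of_tendsto_of_tendsto' hlower (tendsto_prod_one_add_sq_div_gammaRatio hx ha)
    fun n => ?_
  have := sq_div_sub_le_sum_sq_div_mul hx ha n
  have := one_add_sum_le_prod_one_add (range n)
    (f := fun j : ℕ => a ^ 2 / ((x + j) * (x + j + 2 * a))) fun j _ => by positivity
  linarith

theorem gammaRatio_le_exp (hx : 1 < x) (ha : 0 ≤ a) :
    gammaRatio a x ≤ exp (a ^ 2 / (x - 1)) := by
  have hx0 : 0 < x := by linarith
  refine le_of_tendsto' (tendsto_prod_one_add_sq_div_gammaRatio hx0 ha) fun n => ?_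
  exact (prod_one_add_le_exp_sum _ fun j => by positivity).trans
    (exp_le_exp.2 (sum_sq_div_mul_le hx ha n))

theorem tendsto_mul_gammaRatio_sub_one (ha : 0 ≤ a) :
    Tendsto (fun x => x * (gammaRatio a x - 1)) atTop (𝓝 (a ^ 2)) := by
  have hlim : ∀ c : ℝ, Tendsto (fun x : ℝ => a ^ 2 * (x / (x + c))) atTop (𝓝 (a ^ 2)) :=
    fun c => by simpa using (tendsto_div_add_const_atTop c).const_mul (a ^ 2)
  refine tendsto_of_tendsto_of_tendsto_of_le_of_le' (hlim (2 * a)) (hlim (-1 - a ^ 2)) ?_ ?_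
  · filter_upwards [eventually_gt_atTop 0] with x hx
    have := one_add_sq_div_le_gammaRatio hx ha
    calc a ^ 2 * (x / (x + 2 * a)) = x * (a ^ 2 / (x + 2 * a)) := by ring
      _ ≤ x * (gammaRatio a x - 1) := mul_le_mul_of_nonneg_left (by linarith) hx.le
  · filter_upwards [eventually_gt_atTop (1 + a ^ 2)] with x hx
    have hx1 : 0 < x - 1 := by nlinarith
    set u := a ^ 2 / (x - 1) with hu
    have hu1 : u < 1 := by rw [hu, div_lt_one hx1]; linarith
    have := gammaRatio_le_exp (by linarith : 1 < x) ha
    have := exp_sub_one_le_div_one_sub (by positivity) hu1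
    calc x * (gammaRatio a x - 1) ≤ x * (u / (1 - u)) :=
          mul_le_mul_of_nonneg_left (by linarith) (by linarith)
      _ = a ^ 2 * (x / (x + (-1 - a ^ 2))) := by
          have : x - 1 - a ^ 2 ≠ 0 := by linarith
          rw [hu, show x + (-1 - a ^ 2) = x - 1 - a ^ 2 by ring]
          field_simp

theorem Gamma_add_le_Gamma_mul_rpow (hx : 0 < x) (ha0 : 0 < a) (ha1 : a < 1) :
    Gamma (x + a) ≤ Gamma x * x ^ a := by
  have hG : 0 < Gamma x := Gamma_pos_of_pos hx
  have h := Gamma_mul_add_mul_le_rpow_Gamma_mul_rpow_Gamma hx (by linarith : 0 < x + 1)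
    (by linarith : 0 < 1 - a) ha0 (by ring)
  rw [show (1 - a) * x + a * (x + 1) = x + a by ring, Gamma_add_one hx.ne'] at h
  calc Gamma (x + a) ≤ Gamma x ^ (1 - a) * (x * Gamma x) ^ a := h
    _ = Gamma x * x ^ a := by
        rw [mul_rpow hx.le hG.le, mul_left_comm, ← rpow_add hG, sub_add_cancel,
          rpow_one, mul_comm]

theorem Gamma_add_one_le_Gamma_add_mul_rpow (hx : 0 < x + a) (ha0 : 0 < a) (ha1 : a < 1) :
    Gamma (x + 1) ≤ Gamma (x + a) * (x + a) ^ (1 - a) := by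
  have hG : 0 < Gamma (x + a) := Gamma_pos_of_pos hx
  have h := Gamma_mul_add_mul_le_rpow_Gamma_mul_rpow_Gamma hx (by linarith : 0 < x + a + 1)
    ha0 (by linarith : 0 < 1 - a) (by ring)
  rw [show a * (x + a) + (1 - a) * (x + a + 1) = x + 1 by ring, Gamma_add_one hx.ne'] at h
  calc Gamma (x + 1) ≤ Gamma (x + a) ^ a * ((x + a) * Gamma (x + a)) ^ (1 - a) := h
    _ = Gamma (x + a) * (x + a) ^ (1 - a) := by
        rw [mul_rpow hx.le hG.le, mul_left_comm, ← rpow_add hG, add_sub_cancel,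
          rpow_one, mul_comm]

theorem tendsto_Gamma_add_div_Gamma_mul_rpow (ha0 : 0 < a) (ha1 : a < 1) :
    Tendsto (fun x => Gamma (x + a) / (Gamma x * x ^ a)) atTop (𝓝 1) := by
  have hlower : Tendsto (fun x : ℝ => (x / (x + a)) ^ (1 - a)) atTop (𝓝 1) := by
    simpa using (tendsto_div_add_const_atTop a).rpow_const (Or.inr (by linarith))
  refine tendsto_of_tendsto_of_tendsto_of_le_of_le' hlower tendsto_const_nhds ?_ ?_
  all_goals filter_upwards [eventually_gt_atTop 0] with x hx
  all_goals have : 0 < Gamma x * x ^ a := mul_pos (Gamma_pos_of_pos hx) (rpow_pos_of_pos hx a)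
  · have h := Gamma_add_one_le_Gamma_add_mul_rpow (by linarith : 0 < x + a) ha0 ha1
    rw [Gamma_add_one hx.ne'] at h
    have hxa : 0 < x + a := by linarith
    rw [le_div_iff₀ this, div_rpow hx.le hxa.le]
    calc x ^ (1 - a) / (x + a) ^ (1 - a) * (Gamma x * x ^ a)
        = x * Gamma x / (x + a) ^ (1 - a) := by
          rw [div_mul_eq_mul_div, mul_left_comm, ← rpow_add hx, sub_add_cancel,
            rpow_one, mul_comm]
      _ ≤ Gamma (x + a) := by rw [div_le_iff₀ (rpow_pos_of_pos hxa _)]; exact h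
  · rw [div_le_one this]
    exact Gamma_add_le_Gamma_mul_rpow hx ha0 ha1

theorem tendsto_rpow_mul_sqrt_Gamma_sub_div_Gamma (ha0 : 0 < a) (ha1 : a < 1) :
    Tendsto (fun x : ℝ => x ^ ((1 : ℝ) / 2 - a) *
      √(Gamma (x + 2 * a) * Gamma x - Gamma (x + a) ^ 2) / Gamma x) atTop (𝓝 a) := by
  have hR := (tendsto_mul_gammaRatio_sub_one ha0.le).sqrt
  rw [sqrt_sq ha0.le] at hR
  have h := (tendsto_Gamma_add_div_Gamma_mul_rpow ha0 ha1).mul hR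
  rw [one_mul] at h
  refine h.congr' ?_
  filter_upwards [eventually_gt_atTop 0] with x hx
  have hG : 0 < Gamma (x + a) := Gamma_pos_of_pos (by linarith)
  have hdiff : Gamma (x + 2 * a) * Gamma x - Gamma (x + a) ^ 2 =
      Gamma (x + a) ^ 2 * (gammaRatio a x - 1) := by
    rw [gammaRatio]
    field_simp
  rw [hdiff, sqrt_mul (sq_nonneg _), sqrt_sq hG.le, sqrt_mul hx.le, rpow_sub hx,
    ← sqrt_eq_rpow]
  field_simp

end

theorem std_decreasing_high_dim (d : ℝ) (hd : 2 < d) :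
    Tendsto (fun k : ℕ =>
        (k : ℝ) ^ ((1 : ℝ) / 2 - 1 / d) *
          Real.sqrt (Real.Gamma ((k : ℝ) + 2 / d) * Real.Gamma (k : ℝ)
            - Real.Gamma ((k : ℝ) + 1 / d) ^ 2) / Real.Gamma (k : ℝ))
      atTop (nhds (1 / d)) := by
  have hd1 : 1 / d < 1 := by rw [div_lt_one (by linarith)]; linarith
  rw [show 2 / d = 2 * (1 / d) by ring]
  exact (tendsto_rpow_mul_sqrt_Gamma_sub_div_Gamma (by positivity) hd1).comp
    tendsto_natCast_atTop_atTop
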